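/- Let Γ be a group acting by isometries on a metric space X, and suppose there is a nonempty Γ-invariant subset C ⊆ X on which Γ acts properly discontinuously and cocompactly, with C a length (geodesic) space. Then Γ is finitely generated and, for any point x₀ ∈ C, the orbit map γ ↦ γ·x₀ is a quasi-isometry from Γ (with a word metric) to C (Milnor–Švarc lemma). -/

import Mathlib

/-!
Fix a compact `K ⊆ C` whose translates cover `C` and a point `k₀ ∈ K`. Proper discontinuity
gives a Lebesgue number `ε > 0`: the points of `C` within `ε` of `K` are moved into `K` by a
fixed finite set `F` of group elements. Cutting a geodesic of length `d` from `k₀` to `g • k₀`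
into `⌈d / ε⌉` pieces of length `≤ ε` and pulling its points back into `K` one by one writes `g`
as a word of length `≤ d / ε + 2` in `F` and the finitely many elements that move `k₀` into `K`.
These elements generate `Γ`, and conversely the triangle inequality bounds `d(k₀, g • k₀)` by
the largest displacement of a generator times the word length of `g`.
-/

/-- The word length of `g` with respect to a generating set `S`. -/
noncomputable def wordLength {G : Type*} [Group G] (S : Set G) (g : G) : ℕ :=
  sInf {p : ℕ | ∃ f : Fin p → G, (∀ i, f i ∈ S ∪ S⁻¹) ∧ g = (List.ofFn f).prod}

open Set Filter Topology

section WordLength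

variable {G : Type*} [Group G] {S : Set G}

theorem wordLength_le_length {l : List G} (hl : ∀ s ∈ l, s ∈ S ∪ S⁻¹) :
    wordLength S l.prod ≤ l.length :=
  Nat.sInf_le ⟨l.get, fun i => hl _ (l.get_mem i), by rw [List.ofFn_get]⟩

theorem list_prod_mem_closure {l : List G} (hl : ∀ s ∈ l, s ∈ S ∪ S⁻¹) :
    l.prod ∈ Subgroup.closure S := by
  rw [← Subgroup.mem_toSubmonoid, Subgroup.closure_toSubmonoid]
  exact Submonoid.list_prod_mem _ fun s hs => Submonoid.subset_closure (hl s hs)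

theorem exists_list_length_eq_wordLength {g : G} (hg : g ∈ Subgroup.closure S) :
    ∃ l : List G, (∀ s ∈ l, s ∈ S ∪ S⁻¹) ∧ l.prod = g ∧ l.length = wordLength S g := by
  rw [← Subgroup.mem_toSubmonoid, Subgroup.closure_toSubmonoid] at hg
  obtain ⟨l, hl, rfl⟩ := Submonoid.exists_list_of_mem_closure hg
  obtain ⟨f, hf, hprod⟩ := Nat.sInf_mem (s := {p : ℕ | ∃ f : Fin p → G,
      (∀ i, f i ∈ S ∪ S⁻¹) ∧ l.prod = (List.ofFn f).prod})
    ⟨l.length, l.get, fun i => hl _ (l.get_mem i), by rw [List.ofFn_get]⟩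
  refine ⟨List.ofFn f, ?_, hprod.symm, List.length_ofFn⟩
  simpa only [List.mem_ofFn, forall_exists_index, forall_apply_eq_imp_iff] using hf

end WordLength

theorem exists_strictMono_injective_mem {α : Type*} {G : ℕ → Set α} (hG : ∀ n, (G n).Infinite) :
    ∃ φ : ℕ → ℕ, StrictMono φ ∧ ∃ δ : ℕ → α, Function.Injective δ ∧ ∀ n, δ n ∈ G (φ n) := by
  classical
  obtain ⟨f, hfG, hf⟩ := exists_seq_of_forall_finset_exists (fun p : ℕ × α => p.2 ∈ G p.1)
    (fun p q => p.1 < q.1 ∧ p.2 ≠ q.2) fun s _ => by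
      obtain ⟨a, ha, has⟩ :=
        ((hG (s.sup Prod.fst + 1)).sdiff (s.image Prod.snd).finite_toSet).nonempty
      refine ⟨(s.sup Prod.fst + 1, a), ha, fun p hp =>
        ⟨Nat.lt_succ_of_le (Finset.le_sup hp), fun h => has ?_⟩⟩
      exact Finset.mem_coe.2 (Finset.mem_image.2 ⟨p, hp, h⟩)
  refine ⟨fun n => (f n).1, fun m n h => (hf m n h).1, fun n => (f n).2, fun m n h => ?_, hfG⟩
  by_contra hmn
  rcases lt_or_gt_of_ne hmn with hlt | hlt
  · exact (hf m n hlt).2 h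
  · exact (hf n m hlt).2 h.symm

theorem IsCompact.exists_strictMono_isCompact_union_range {X : Type*} [PseudoMetricSpace X]
    {K : Set X} (hK : IsCompact K) {x k : ℕ → X} (hk : ∀ n, k n ∈ K)
    (hxk : Tendsto (fun n => dist (x n) (k n)) atTop (𝓝 0)) :
    ∃ ψ : ℕ → ℕ, StrictMono ψ ∧ IsCompact (K ∪ range (x ∘ ψ)) := by
  obtain ⟨a, haK, ψ, hψ, hka⟩ := hK.tendsto_subseq hk
  have hxa : Tendsto (x ∘ ψ) atTop (𝓝 a) :=
    hka.congr_dist ((hxk.comp hψ.tendsto_atTop).congr fun n => dist_comm _ _)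
  refine ⟨ψ, hψ, ?_⟩
  simpa only [union_insert, insert_eq_of_mem (mem_union_left _ haK)] using
    hK.union hxa.isCompact_insert_range

section Action

variable {Γ X : Type*} [Group Γ] [PseudoMetricSpace X] [MulAction Γ X]

theorem exists_pos_finset_smul_mem_of_dist_le {C K : Set X} (hKC : K ⊆ C) (hK : IsCompact K)
    (hproper : ∀ K' ⊆ C, IsCompact K' → {γ : Γ | ((γ • ·) '' K' ∩ K').Nonempty}.Finite)
    (hcover : ∀ x ∈ C, ∃ γ : Γ, γ • x ∈ K) :
    ∃ ε > 0, ∃ F : Finset Γ, ∀ x ∈ C, (∃ k ∈ K, dist x k ≤ ε) → ∃ γ ∈ F, γ • x ∈ K := by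
  -- `X` need not be proper, so the compact set contradicting proper discontinuity is built from
  -- a convergent sequence of points brought into `K` by pairwise distinct elements.
  set G : ℕ → Set Γ := fun n => {γ | ∃ x ∈ C, (∃ k ∈ K, dist x k ≤ 1 / (n + 1)) ∧ γ • x ∈ K}
  by_cases hfin : ∃ n, (G n).Finite
  · obtain ⟨n, hn⟩ := hfin
    refine ⟨1 / (n + 1), by positivity, hn.toFinset, fun x hx hxK => ?_⟩
    obtain ⟨γ, hγ⟩ := hcover x hx
    exact ⟨γ, hn.mem_toFinset.2 ⟨x, hx, hxK, hγ⟩, hγ⟩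
  simp only [not_exists, Set.not_finite] at hfin
  obtain ⟨φ, hφ, δ, hδ, hδG⟩ := exists_strictMono_injective_mem hfin
  simp only [G, mem_ofPred_eq] at hδG
  choose x hxC hxK hδx using hδG
  choose k hkK hxk using hxK
  obtain ⟨ψ, hψ, hK'⟩ := hK.exists_strictMono_isCompact_union_range hkK <|
    squeeze_zero (fun _ => dist_nonneg) hxk
      (tendsto_one_div_add_atTop_nhds_zero_nat.comp hφ.tendsto_atTop)
  refine ((hproper _ (union_subset hKC (range_subset_iff.2 fun n => hxC (ψ n))) hK').not_infinite
    (infinite_of_injective_forall_mem (hδ.comp hψ.injective) fun n => ?_)).elim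
  exact ⟨δ (ψ n) • x (ψ n), ⟨x (ψ n), Or.inr ⟨n, rfl⟩, rfl⟩, Or.inl (hδx (ψ n))⟩

end Action

theorem exists_chain_of_lipschitzOnWith {X : Type*} [PseudoMetricSpace X] {C : Set X}
    {f : ℝ → X} {R ε : ℝ} (hR : 0 ≤ R) (hε : 0 < ε) (hfC : MapsTo f (Icc 0 R) C)
    (hf : LipschitzOnWith 1 f (Icc 0 R)) :
    ∃ p : ℕ → X, p 0 = f 0 ∧ p ⌈R / ε⌉₊ = f R ∧ (∀ i, p i ∈ C) ∧
      ∀ i, dist (p i) (p (i + 1)) ≤ ε := by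
  have ht : ∀ i : ℕ, min (i * ε) R ∈ Icc 0 R :=
    fun i => ⟨le_min (by positivity) hR, min_le_right _ _⟩
  refine ⟨fun i => f (min (i * ε) R), by simp [hR], ?_, fun i => hfC (ht i), fun i => ?_⟩
  · exact congrArg f (min_eq_right ((div_le_iff₀ hε).1 (Nat.le_ceil _)))
  · calc dist (f (min (i * ε) R)) (f (min ((i + 1 : ℕ) * ε) R))
        ≤ |min (i * ε) R - min ((i + 1 : ℕ) * ε) R| := by
          simpa [Real.dist_eq] using hf.dist_le_mul _ (ht i) _ (ht (i + 1))
      _ ≤ |i * ε - (i + 1 : ℕ) * ε| := by simpa using abs_min_sub_min_le_max _ R _ R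
      _ = ε := by rw [abs_sub_comm]; push_cast; simp [add_mul, hε.le]

section IsometricAction

variable {Γ X : Type*} [Group Γ] [PseudoMetricSpace X] [MulAction Γ X] [IsIsometricSMul Γ X]

theorem dist_list_prod_smul_le {x : X} {M : ℝ} :
    ∀ {l : List Γ}, (∀ s ∈ l, dist x (s • x) ≤ M) → dist x (l.prod • x) ≤ M * l.length
  | [], _ => by simp
  | s :: l, hl => by
    rw [List.forall_mem_cons] at hl
    calc dist x ((s :: l).prod • x)
        ≤ dist x (s • x) + dist (s • x) (s • l.prod • x) := by
          rw [List.prod_cons, mul_smul]; exact dist_triangle _ _ _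
      _ ≤ M + M * l.length := by
          rw [dist_smul]; exact add_le_add hl.1 (dist_list_prod_smul_le hl.2)
      _ = M * (s :: l).length := by simp; ring

theorem dist_smul_le_mul_wordLength {S : Set Γ} (hS : Subgroup.closure S = ⊤) {x : X} {M : ℝ}
    (hM : ∀ s ∈ S, dist x (s • x) ≤ M) (g : Γ) : dist x (g • x) ≤ M * wordLength S g := by
  obtain ⟨l, hl, rfl, hlen⟩ := exists_list_length_eq_wordLength (hS ▸ Subgroup.mem_top g)
  rw [← hlen]
  refine dist_list_prod_smul_le fun s hs => ?_
  rcases hl s hs with hs | hs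
  · exact hM s hs
  · rw [← dist_smul s⁻¹, inv_smul_smul, dist_comm]
    exact hM _ hs

theorem exists_list_smul_mem_of_chain {C K : Set X} {ε : ℝ} {F : Set Γ}
    (hCinv : ∀ γ : Γ, ∀ x ∈ C, γ • x ∈ C)
    (hF : ∀ x ∈ C, (∃ k ∈ K, dist x k ≤ ε) → ∃ γ ∈ F, γ • x ∈ K)
    {p : ℕ → X} (hp0 : p 0 ∈ K) (hpC : ∀ i, p i ∈ C) (hp : ∀ i, dist (p i) (p (i + 1)) ≤ ε) :
    ∀ n, ∃ l : List Γ, (∀ s ∈ l, s ∈ F) ∧ l.length = n ∧ l.prod • p n ∈ K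
  | 0 => ⟨[], by simp, rfl, by simpa using hp0⟩
  | n + 1 => by
    obtain ⟨l, hlF, hlen, hlK⟩ := exists_list_smul_mem_of_chain hCinv hF hp0 hpC hp n
    obtain ⟨σ, hσF, hσK⟩ := hF _ (hCinv l.prod _ (hpC (n + 1)))
      ⟨_, hlK, by rw [dist_smul, dist_comm]; exact hp n⟩
    refine ⟨σ :: l, List.forall_mem_cons.2 ⟨hσF, hlF⟩, by simp [hlen], ?_⟩
    rwa [List.prod_cons, mul_smul]

theorem exists_list_prod_eq_of_chain {C K : Set X} {ε : ℝ} {F S : Set Γ} {k₀ : X}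
    (hFS : F ⊆ S) (hKS : ∀ γ : Γ, γ • k₀ ∈ K → γ ∈ S) (hCinv : ∀ γ : Γ, ∀ x ∈ C, γ • x ∈ C)
    (hF : ∀ x ∈ C, (∃ k ∈ K, dist x k ≤ ε) → ∃ γ ∈ F, γ • x ∈ K)
    {p : ℕ → X} (hk₀ : k₀ ∈ K) (hp0 : p 0 = k₀) (hpC : ∀ i, p i ∈ C)
    (hp : ∀ i, dist (p i) (p (i + 1)) ≤ ε) {g : Γ} {n : ℕ} (hpn : p n = g • k₀) :
    ∃ l : List Γ, (∀ s ∈ l, s ∈ S ∪ S⁻¹) ∧ l.prod = g ∧ l.length = n + 1 := by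
  obtain ⟨l, hlF, hlen, hlK⟩ :=
    exists_list_smul_mem_of_chain hCinv hF (hp0 ▸ hk₀) hpC hp n
  rw [hpn, smul_smul] at hlK
  refine ⟨(l.map (·⁻¹)).reverse ++ [l.prod * g], ?_, ?_, by simp [hlen]⟩
  · simp only [List.mem_append, List.mem_reverse, List.mem_map, List.mem_singleton]
    rintro s (⟨t, ht, rfl⟩ | rfl)
    · exact Or.inr (by simpa using hFS (hlF t ht))
    · exact Or.inl (hKS _ hlK)
  · rw [List.prod_append, ← List.prod_inv_reverse]; simp

theorem abs_dist_smul_smul_sub_dist_le (γ δ : Γ) (x y : X) :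
    |dist (γ • x) (δ • x) - dist y ((γ⁻¹ * δ) • y)| ≤ 2 * dist x y := by
  have h : dist (γ • x) (δ • x) = dist x ((γ⁻¹ * δ) • x) := by
    rw [← dist_smul γ⁻¹, inv_smul_smul, smul_smul]
  rw [h, ← Real.dist_eq]
  calc dist (dist x ((γ⁻¹ * δ) • x)) (dist y ((γ⁻¹ * δ) • y))
      ≤ dist x y + dist ((γ⁻¹ * δ) • x) ((γ⁻¹ * δ) • y) := dist_dist_dist_le _ _ _ _
    _ = 2 * dist x y := by rw [dist_smul]; ring

theorem dist_inv_smul_le_of_smul_mem {K : Set X} (hK : Bornology.IsBounded K) {k₀ x : X}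
    {γ : Γ} (hk₀ : k₀ ∈ K) (hx : γ • x ∈ K) (x₀ : X) :
    dist (γ⁻¹ • x₀) x ≤ dist x₀ k₀ + Metric.diam K := by
  calc dist (γ⁻¹ • x₀) x = dist x₀ (γ • x) := by rw [← dist_smul γ, smul_inv_smul]
    _ ≤ dist x₀ k₀ + dist k₀ (γ • x) := dist_triangle _ _ _
    _ ≤ dist x₀ k₀ + Metric.diam K := by gcongr; exact Metric.dist_le_diam_of_mem hK hk₀ hx

end IsometricAction

theorem exists_orbit_quasiIsometry_of_wordLength_bounds {Γ X : Type*} [Group Γ]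
    [PseudoMetricSpace X] [MulAction Γ X] [IsIsometricSMul Γ X] {S : Set Γ} {C K : Set X}
    {k₀ : X} {ε M : ℝ} (hε : 0 < ε) (hK : Bornology.IsBounded K) (hk₀ : k₀ ∈ K)
    (hcover : ∀ x ∈ C, ∃ γ : Γ, γ • x ∈ K)
    (hlower : ∀ g : Γ, (wordLength S g : ℝ) ≤ dist k₀ (g • k₀) / ε + 2)
    (hupper : ∀ g : Γ, dist k₀ (g • k₀) ≤ M * wordLength S g) (x₀ : X) :
    ∃ L : ℝ, 0 < L ∧ ∃ A : ℝ, 0 ≤ A ∧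
      (∀ γ δ : Γ,
        (1 / L) * (wordLength S (γ⁻¹ * δ) : ℝ) - A ≤ dist (γ • x₀) (δ • x₀) ∧
        dist (γ • x₀) (δ • x₀) ≤ L * (wordLength S (γ⁻¹ * δ) : ℝ) + A) ∧
      (∀ x ∈ C, ∃ γ : Γ, dist (γ • x₀) x ≤ A) := by
  have hdiam : 0 ≤ Metric.diam K := Metric.diam_nonneg
  refine ⟨max M ε⁻¹, lt_max_of_lt_right (inv_pos.2 hε),
    2 * ε + Metric.diam K + 2 * dist x₀ k₀, by positivity, fun γ δ => ?_, fun x hx => ?_⟩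
  · have hbase := abs_le.1 (abs_dist_smul_smul_sub_dist_le γ δ x₀ k₀)
    have hw : (0 : ℝ) ≤ wordLength S (γ⁻¹ * δ) := Nat.cast_nonneg _
    have hL : 1 / max M ε⁻¹ ≤ ε := by
      rw [one_div]; exact inv_le_of_inv_le₀ hε (le_max_right _ _)
    have hεw : ε * wordLength S (γ⁻¹ * δ) ≤ dist k₀ ((γ⁻¹ * δ) • k₀) + 2 * ε := by
      have := mul_le_mul_of_nonneg_left (hlower (γ⁻¹ * δ)) hε.le
      rwa [mul_add, mul_div_cancel₀ _ hε.ne', mul_comm ε 2] at this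
    constructor
    · nlinarith [mul_le_mul_of_nonneg_right hL hw]
    · nlinarith [hupper (γ⁻¹ * δ), mul_le_mul_of_nonneg_right (le_max_left M ε⁻¹) hw]
  · obtain ⟨γ, hγ⟩ := hcover x hx
    have hd₀ : 0 ≤ dist x₀ k₀ := dist_nonneg
    exact ⟨γ⁻¹, (dist_inv_smul_le_of_smul_mem hK hk₀ hγ x₀).trans (by linarith)⟩

/-- Milnor–Švarc lemma: if a group `Γ` acts by isometries on a metric space `X`,
preserving a nonempty subset `C` which is geodesic, and the action on `C` is properly
discontinuous and cocompact, then `Γ` is finitely generated and every orbit map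
`γ ↦ γ·x₀` (`x₀ ∈ C`) is a quasi-isometry from `Γ` with a word metric to `C`. -/
theorem milnor_svarc {Γ X : Type*} [Group Γ] [MetricSpace X] [MulAction Γ X]
    (hisom : ∀ γ : Γ, Isometry (fun x : X => γ • x))
    (C : Set X) (hCne : C.Nonempty)
    (hCinv : ∀ γ : Γ, ∀ x ∈ C, γ • x ∈ C)
    (hgeo : ∀ x ∈ C, ∀ y ∈ C, ∃ f : ℝ → X, f 0 = x ∧ f (dist x y) = y ∧
      (∀ t ∈ Set.Icc (0 : ℝ) (dist x y), f t ∈ C) ∧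
      ∀ s ∈ Set.Icc (0 : ℝ) (dist x y), ∀ t ∈ Set.Icc (0 : ℝ) (dist x y),
        dist (f s) (f t) = |s - t|)
    (hproper : ∀ K ⊆ C, IsCompact K → {γ : Γ | ((γ • ·) '' K ∩ K).Nonempty}.Finite)
    (hcocompact : ∃ K ⊆ C, IsCompact K ∧ ∀ x ∈ C, ∃ γ : Γ, γ • x ∈ K) :
    ∃ S : Finset Γ, Subgroup.closure (S : Set Γ) = ⊤ ∧
      ∀ x₀ ∈ C, ∃ L : ℝ, 0 < L ∧ ∃ A : ℝ, 0 ≤ A ∧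
        (∀ γ δ : Γ,
          (1 / L) * (wordLength (S : Set Γ) (γ⁻¹ * δ) : ℝ) - A ≤ dist (γ • x₀) (δ • x₀) ∧
          dist (γ • x₀) (δ • x₀) ≤ L * (wordLength (S : Set Γ) (γ⁻¹ * δ) : ℝ) + A) ∧
        (∀ x ∈ C, ∃ γ : Γ, dist (γ • x₀) x ≤ A) := by
  classical
  have : IsIsometricSMul Γ X := ⟨hisom⟩
  obtain ⟨K, hKC, hK, hcover⟩ := hcocompact
  obtain ⟨k₀, hk₀⟩ : K.Nonempty := let ⟨c, hc⟩ := hCne; let ⟨γ, hγ⟩ := hcover c hc; ⟨_, hγ⟩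
  obtain ⟨ε, hε, F, hF⟩ := exists_pos_finset_smul_mem_of_dist_le hKC hK hproper hcover
  set S : Finset Γ := F ∪ (hproper K hKC hK).toFinset
  have hword (g : Γ) : ∃ l : List Γ, (∀ s ∈ l, s ∈ (S : Set Γ) ∪ (S : Set Γ)⁻¹) ∧
      l.prod = g ∧ (l.length : ℝ) ≤ dist k₀ (g • k₀) / ε + 2 := by
    obtain ⟨f, hf0, hfR, hfC, hfiso⟩ := hgeo k₀ (hKC hk₀) (g • k₀) (hCinv g k₀ (hKC hk₀))
    obtain ⟨p, hp0, hpn, hpC, hp⟩ := exists_chain_of_lipschitzOnWith dist_nonneg hε hfC <|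
      LipschitzOnWith.of_dist_le_mul fun s hs t ht => by simp [hfiso s hs t ht, Real.dist_eq]
    obtain ⟨l, hlS, hlg, hlen⟩ := exists_list_prod_eq_of_chain (S := S)
      (Finset.coe_subset.2 Finset.subset_union_left) (fun γ hγ => Finset.mem_union_right _
        ((hproper K hKC hK).mem_toFinset.2 ⟨_, ⟨k₀, hk₀, rfl⟩, hγ⟩))
      hCinv hF hk₀ (hp0.trans hf0) hpC hp (hpn.trans hfR)
    have hceil := Nat.ceil_lt_add_one (div_nonneg (dist_nonneg (x := k₀) (y := g • k₀)) hε.le)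
    refine ⟨l, hlS, hlg, ?_⟩
    rw [hlen]; push_cast; linarith
  have hS : Subgroup.closure (S : Set Γ) = ⊤ := (Subgroup.eq_top_iff' _).2 fun g =>
    let ⟨_, hl, hlg, _⟩ := hword g; hlg ▸ list_prod_mem_closure hl
  obtain ⟨M, hM⟩ := (S.finite_toSet.image fun s => dist k₀ (s • k₀)).bddAbove
  refine ⟨S, hS, fun x₀ _ => exists_orbit_quasiIsometry_of_wordLength_bounds hε hK.isBounded hk₀
    hcover (fun g => ?_) (dist_smul_le_mul_wordLength hS fun s hs => hM ⟨s, hs, rfl⟩) x₀⟩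
  obtain ⟨l, hl, rfl, hlen⟩ := hword g
  exact (Nat.cast_le.2 (wordLength_le_length hl)).trans hlen
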